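/- Let D ⊆ ℂ be a domain and suppose δU, δV, δW : D → ℝ are harmonic, satisfy δU + δV + δW = 0 on D, and the three combinations δU + (i/√3)(δV - δW), δV + (i/√3)(δW - δU), δW + (i/√3)(δU - δV) are holomorphic. If D is the open equilateral triangle and δU, δV, δW extend continuously to the closure vanishing respectively on the three sides (δU = 0 on one side, δV = 0 on a second, δW = 0 on the third), and all three functions are bounded, then δU = δV = δW = 0 on D. -/

import Mathlib

/-!
Put `Φ = δU + (i/√3)(δV - δW)`. Whenever `δU + δV + δW = 0` one has
`Re Φ³ = 4 δU δV δW`, so `Re Φ³` vanishes on every side of the triangle. The maximum modulus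
principle applied to `exp (±Φ³)` gives `Re Φ³ = 0` inside, so by the open mapping theorem `Φ³`
is constant; its value at the vertex `1`, where all three functions vanish, is `0`. Hence
`Φ = 0`, i.e. `δU = 0` and `δV = δW`, and the sum condition forces `δV = δW = 0`.
-/

open Complex

/-- The third vertex `1/2 + i√3/2` of the unit equilateral triangle. -/
noncomputable def vtx3 : ℂ := 1 / 2 + I * (Real.sqrt 3 / 2)

/-- The open equilateral triangle with vertices `0`, `1`, `1/2 + i√3/2`. -/
noncomputable def DTri : Set ℂ := interior (convexHull ℝ {0, 1, vtx3})

/-- Harmonicity (vanishing Laplacian) on a set. -/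
noncomputable def IsHarmonicOn (f : ℂ → ℝ) (s : Set ℂ) : Prop :=
  ∀ z ∈ s,
    fderiv ℝ (fun w => fderiv ℝ f w 1) z 1 +
      fderiv ℝ (fun w => fderiv ℝ f w Complex.I) z Complex.I = 0

open Set

lemma affineIndependent_triangle : AffineIndependent ℝ ![0, 1, vtx3] :=
  affineIndependent_of_ne_of_mem_of_mem_of_notMem (s := (LinearMap.ker imLm).toAffineSubspace)
    zero_ne_one (by simp) (by simp) (by simp [vtx3])

noncomputable def triangleBasis : AffineBasis (Fin 3) ℝ ℂ :=
  ⟨![0, 1, vtx3], affineIndependent_triangle, by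
    rw [affineIndependent_triangle.affineSpan_eq_top_iff_card_eq_finrank_add_one]
    simp [Complex.finrank_real_complex]⟩

lemma coe_triangleBasis : ⇑triangleBasis = ![0, 1, vtx3] := rfl

lemma range_triangleBasis : range triangleBasis = {0, 1, vtx3} := by
  ext; simp [coe_triangleBasis, or_comm, or_left_comm]

lemma DTri_eq_setOf_coord_pos : DTri = {z | ∀ i, 0 < triangleBasis.coord i z} := by
  rw [DTri, ← range_triangleBasis, triangleBasis.interior_convexHull]

lemma isOpen_DTri : IsOpen DTri := isOpen_interior

lemma isConnected_DTri : IsConnected DTri := by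
  refine ⟨?_, (convex_convexHull ℝ _).interior.isPreconnected⟩
  rw [DTri, interior_convexHull_nonempty_iff_affineSpan_eq_top, ← range_triangleBasis]
  exact triangleBasis.tot

lemma isBounded_DTri : Bornology.IsBounded DTri :=
  ((toFinite _).isCompact_convexHull ℝ).isBounded.subset interior_subset

lemma closure_DTri : closure DTri = convexHull ℝ {0, 1, vtx3} := by
  rw [DTri, (convex_convexHull ℝ _).closure_interior_eq_closure_of_nonempty_interior
    isConnected_DTri.nonempty, ((toFinite _).isCompact_convexHull ℝ).isClosed.closure_eq]

lemma frontier_DTri_subset :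
    frontier DTri ⊆ segment ℝ 0 1 ∪ segment ℝ 1 vtx3 ∪ segment ℝ 0 vtx3 := by
  intro z hz
  have hnn : ∀ i, 0 ≤ triangleBasis.coord i z := by
    have := closure_DTri ▸ frontier_subset_closure hz
    rwa [← range_triangleBasis, triangleBasis.convexHull_eq_nonneg_coord] at this
  have hsum := triangleBasis.sum_coord_apply_eq_one z
  have hcomb := triangleBasis.linear_combination_coord_eq_self z
  simp only [Fin.sum_univ_three, coe_triangleBasis] at hsum hcomb
  obtain ⟨i, hi⟩ : ∃ i, triangleBasis.coord i z = 0 := by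
    by_contra! h
    refine (isOpen_DTri.frontier_eq ▸ hz).2 ?_
    rw [DTri_eq_setOf_coord_pos]
    exact fun i => (hnn i).lt_of_ne (h i).symm
  fin_cases i <;> simp only [Fin.zero_eta, Fin.mk_one, Fin.reduceFinMk, Fin.isValue] at hi
  · exact Or.inl (Or.inr ⟨_, _, hnn 1, hnn 2, by linarith, by simpa using hcomb⟩)
  · exact Or.inr ⟨_, _, hnn 0, hnn 2, by linarith, by simpa [hi] using hcomb⟩
  · exact Or.inl (Or.inl ⟨_, _, hnn 0, hnn 1, by linarith, by simpa [hi] using hcomb⟩)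

section MaximumPrinciple

variable {E : Type*} [NormedAddCommGroup E] [NormedSpace ℂ E] [Nontrivial E]
  {U : Set E} {g : E → ℂ}

lemma DiffContOnCl.re_le_of_forall_mem_frontier_re_le (hU : Bornology.IsBounded U)
    (hg : DiffContOnCl ℂ g U) {C : ℝ} (hC : ∀ z ∈ frontier U, (g z).re ≤ C) {z : E}
    (hz : z ∈ closure U) : (g z).re ≤ C := by
  have := Complex.norm_le_of_forall_mem_frontier_norm_le hU
    ⟨hg.differentiableOn.cexp, hg.continuousOn.cexp⟩
    (fun w hw => (norm_exp (g w)).trans_le (Real.exp_le_exp.2 (hC w hw))) hz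
  rwa [norm_exp, Real.exp_le_exp] at this

lemma DiffContOnCl.re_eq_zero_of_forall_mem_frontier (hU : Bornology.IsBounded U)
    (hg : DiffContOnCl ℂ g U) (hC : ∀ z ∈ frontier U, (g z).re = 0) {z : E}
    (hz : z ∈ closure U) : (g z).re = 0 := by
  have hle := hg.re_le_of_forall_mem_frontier_re_le hU (fun w hw => (hC w hw).le) hz
  have hge := hg.neg.re_le_of_forall_mem_frontier_re_le hU (C := 0)
    (fun w hw => by simp [hC w hw]) hz
  simp only [Pi.neg_apply, neg_re, neg_nonpos] at hge
  exact le_antisymm hle hge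

end MaximumPrinciple

lemma DiffContOnCl.exists_eqOn_closure_const_of_re_frontier_eq_zero {U : Set ℂ} {g : ℂ → ℂ}
    (hUo : IsOpen U) (hUc : IsConnected U) (hUb : Bornology.IsBounded U)
    (hg : DiffContOnCl ℂ g U) (hfr : ∀ z ∈ frontier U, (g z).re = 0) :
    ∃ c, EqOn g (fun _ => c) (closure U) := by
  obtain ⟨c, hc⟩ := (hg.differentiableOn.analyticOnNhd hUo).eq_const_of_re_eq_const
    (fun z hz => hg.re_eq_zero_of_forall_mem_frontier hUb hfr (subset_closure hz)) hUo hUc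
  exact ⟨c, EqOn.of_subset_closure hc hg.continuousOn continuousOn_const subset_closure
    subset_rfl⟩

lemma add_I_div_sqrt_three_mul_sub (u v w : ℝ) :
    (u : ℂ) + I / Real.sqrt 3 * ((v : ℂ) - w) = ⟨u, (v - w) / Real.sqrt 3⟩ := by
  apply Complex.ext <;> simp [div_eq_mul_inv, ← ofReal_inv, mul_comm]

lemma re_cube_add_I_div_sqrt_three_mul_sub {u v w : ℝ} (h : u + v + w = 0) :
    (((u : ℂ) + I / Real.sqrt 3 * ((v : ℂ) - w)) ^ 3).re = 4 * u * v * w := by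
  have hb : ((v - w) / Real.sqrt 3) ^ 2 = (v - w) ^ 2 / 3 := by
    rw [div_pow, Real.sq_sqrt zero_le_three]
  rw [add_I_div_sqrt_three_mul_sub]
  simp only [pow_succ, pow_zero, one_mul, mul_re, mul_im]
  obtain rfl : w = -u - v := by linarith
  linear_combination (-3 * u) * hb

lemma eq_zero_of_add_I_div_sqrt_three_mul_sub_eq_zero {u v w : ℝ} (h : u + v + w = 0)
    (h0 : (u : ℂ) + I / Real.sqrt 3 * ((v : ℂ) - w) = 0) : u = 0 ∧ v = 0 ∧ w = 0 := by
  rw [add_I_div_sqrt_three_mul_sub, Complex.ext_iff] at h0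
  obtain ⟨hu, hvw⟩ : u = 0 ∧ (v - w) / Real.sqrt 3 = 0 := h0
  have : v = w := by simpa [sub_eq_zero] using hvw
  exact ⟨hu, by linarith, by linarith⟩

theorem stmt13_general (δU δV δW : ℂ → ℝ)
    (hsum : ∀ z ∈ DTri, δU z + δV z + δW z = 0)
    (h1 : DifferentiableOn ℂ
      (fun z => (δU z : ℂ) + (I / Real.sqrt 3) * ((δV z : ℂ) - (δW z : ℂ))) DTri)
    (hUc : ContinuousOn δU (closure DTri)) (hVc : ContinuousOn δV (closure DTri))
    (hWc : ContinuousOn δW (closure DTri))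
    (hUb : ∀ z ∈ segment ℝ (0 : ℂ) 1, δU z = 0)
    (hVb : ∀ z ∈ segment ℝ (1 : ℂ) vtx3, δV z = 0)
    (hWb : ∀ z ∈ segment ℝ (0 : ℂ) vtx3, δW z = 0) :
    ∀ z ∈ DTri, δU z = 0 ∧ δV z = 0 ∧ δW z = 0 := by
  set Φ : ℂ → ℂ := fun z => (δU z : ℂ) + (I / Real.sqrt 3) * ((δV z : ℂ) - (δW z : ℂ))
  have hsum_cl : ∀ z ∈ closure DTri, δU z + δV z + δW z = 0 :=
    EqOn.of_subset_closure hsum (by fun_prop) continuousOn_const subset_closure subset_rfl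
  have hΦ3 : DiffContOnCl ℂ (fun z => Φ z ^ 3) DTri := ⟨h1.pow 3, by fun_prop⟩
  have hΦ3_frontier : ∀ z ∈ frontier DTri, (Φ z ^ 3).re = 0 := by
    intro z hz
    rw [re_cube_add_I_div_sqrt_three_mul_sub (hsum_cl z (frontier_subset_closure hz))]
    rcases frontier_DTri_subset hz with (h | h) | h
    · simp [hUb z h]
    · simp [hVb z h]
    · simp [hWb z h]
  obtain ⟨c, hc⟩ := hΦ3.exists_eqOn_closure_const_of_re_frontier_eq_zero isOpen_DTri
    isConnected_DTri isBounded_DTri hΦ3_frontier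
  have hone : (1 : ℂ) ∈ closure DTri := closure_DTri ▸ subset_convexHull ℝ _ (by simp)
  have hU1 := hUb 1 (right_mem_segment ℝ 0 1)
  have hV1 := hVb 1 (left_mem_segment ℝ 1 vtx3)
  have hW1 : δW 1 = 0 := by linarith [hsum_cl 1 hone]
  intro z hz
  refine eq_zero_of_add_I_div_sqrt_three_mul_sub_eq_zero (hsum z hz)
    ((pow_eq_zero_iff three_ne_zero).1 ?_)
  calc Φ z ^ 3 = Φ 1 ^ 3 := (hc (subset_closure hz)).trans (hc hone).symm
    _ = 0 := by simp [Φ, hU1, hV1, hW1]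

theorem stmt13 (δU δV δW : ℂ → ℝ)
    (hUh : IsHarmonicOn δU DTri) (hVh : IsHarmonicOn δV DTri)
    (hWh : IsHarmonicOn δW DTri)
    (hsum : ∀ z ∈ DTri, δU z + δV z + δW z = 0)
    (h1 : DifferentiableOn ℂ
      (fun z => (δU z : ℂ) + (I / Real.sqrt 3) * ((δV z : ℂ) - (δW z : ℂ))) DTri)
    (h2 : DifferentiableOn ℂ
      (fun z => (δV z : ℂ) + (I / Real.sqrt 3) * ((δW z : ℂ) - (δU z : ℂ))) DTri)
    (h3 : DifferentiableOn ℂ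
      (fun z => (δW z : ℂ) + (I / Real.sqrt 3) * ((δU z : ℂ) - (δV z : ℂ))) DTri)
    (hUc : ContinuousOn δU (closure DTri)) (hVc : ContinuousOn δV (closure DTri))
    (hWc : ContinuousOn δW (closure DTri))
    (hUb : ∀ z ∈ segment ℝ (0 : ℂ) 1, δU z = 0)
    (hVb : ∀ z ∈ segment ℝ (1 : ℂ) vtx3, δV z = 0)
    (hWb : ∀ z ∈ segment ℝ (0 : ℂ) vtx3, δW z = 0)
    (hbdd : ∃ M : ℝ, ∀ z ∈ DTri, |δU z| ≤ M ∧ |δV z| ≤ M ∧ |δW z| ≤ M) :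
    ∀ z ∈ DTri, δU z = 0 ∧ δV z = 0 ∧ δW z = 0 :=
  stmt13_general δU δV δW hsum h1 hUc hVc hWc hUb hVb hWb
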